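/- arXiv:1904.13211 — 4 statements merged into one kernel-verified Lean document; each statement's English description precedes it below -/
import Mathlib

section
/- Let U : X → (0,∞) be measurable. Assume: Φ[U](x) < ∞ for μ-almost every x; Ψ[U](y) < ∞ for ν-almost every y; μ({x : p(x,y) > 0}) > 0 for ν-almost every y; and μ({x : p(x,y) > 0 for all y ∈ Y}) > 0. Then the fixed point equation Φ[u] = u admits at most one positive solution up to a multiplicative constant: if u' and u'' are measurable functions with 0 < u' ≤ U, 0 < u'' ≤ U, Φ[u'] = u' everywhere and Φ[u''] = u'' everywhere, then there exists κ > 0 such that u'' = κ·u'. -/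
open MeasureTheory ENNReal Filter Topology

noncomputable section

/-- `Ψ[u](y) = ∫_X p(x',y) u(x')⁻¹ dμ(x')`. -/
def fortetPsi {X Y : Type*} [MeasurableSpace X]
    (p : X → Y → ℝ≥0∞) (μ : Measure X) (u : X → ℝ≥0∞) (y : Y) : ℝ≥0∞ :=
  ∫⁻ x, p x y * (u x)⁻¹ ∂μ

/-- The Fortet mapping `Φ[u](x) = ∫_Y p(x,y) Ψ[u](y)⁻¹ dν(y)`. -/
def fortetPhi {X Y : Type*} [MeasurableSpace X] [MeasurableSpace Y]
    (p : X → Y → ℝ≥0∞) (μ : Measure X) (ν : Measure Y) (u : X → ℝ≥0∞) (x : X) : ℝ≥0∞ :=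
  ∫⁻ y, p x y * (fortetPsi p μ u y)⁻¹ ∂ν

open Function

/-! For two solutions `v, w` put `φ = w / (w + v)`. For each `y`, Cauchy–Schwarz with the weight
`p(·,y) / v` gives `Ψ[v]² ≤ (∫ p(·,y) φ / v dμ) (Ψ[v] + Ψ[w])`. Dividing by `Ψ[v] (Ψ[v] + Ψ[w])`
and integrating in `y`, the fixed-point equation for `v` turns the right-hand side into `∫ φ dμ`,
so `∫ Ψ[v] / (Ψ[v] + Ψ[w]) dν ≤ ∫ φ dμ`. The same holds with `v, w` exchanged, and both sides of
the two inequalities add up to `1`, so all of them are equalities. Equality in Cauchy–Schwarz makes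
`φ`, hence `w / v`, constant on the support of `p(·,y)` for almost every `y`; the positive-measure
set of `x` with `p(x,·) > 0` everywhere meets all these supports, so `w = κ v` on all of them.
Then `Ψ[w] = κ⁻¹ Ψ[v]` a.e. and `w = Φ[w] = κ Φ[v] = κ v` everywhere. -/

namespace ENNReal

lemma two_le_div_add_div {c d : ℝ≥0∞} (hc0 : c ≠ 0) (hc : c ≠ ∞) (hd0 : d ≠ 0)
    (hd : d ≠ ∞) : 2 ≤ c / d + d / c := by
  lift c to NNReal using hc
  lift d to NNReal using hd
  simp only [ne_eq, coe_eq_zero] at hc0 hd0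
  rw [← coe_div hd0, ← coe_div hc0, ← coe_add, ← coe_ofNat, coe_le_coe, ← NNReal.coe_le_coe]
  have hc : (0 : ℝ) < c := by positivity
  have hd : (0 : ℝ) < d := by positivity
  push_cast
  rw [div_add_div _ _ hd.ne' hc.ne', le_div_iff₀ (by positivity)]
  nlinarith [sq_nonneg ((c : ℝ) - d)]

lemma eq_of_div_add_div_eq_two {c d : ℝ≥0∞} (hc0 : c ≠ 0) (hc : c ≠ ∞) (hd0 : d ≠ 0)
    (hd : d ≠ ∞) (h : c / d + d / c = 2) : c = d := by
  lift c to NNReal using hc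
  lift d to NNReal using hd
  simp only [ne_eq, coe_eq_zero] at hc0 hd0
  rw [← coe_div hd0, ← coe_div hc0, ← coe_add, ← coe_ofNat, coe_inj, ← NNReal.coe_inj] at h
  have hc : (0 : ℝ) < c := by positivity
  have hd : (0 : ℝ) < d := by positivity
  push_cast at h
  rw [div_add_div _ _ hd.ne' hc.ne', div_eq_iff (by positivity)] at h
  have hsq : ((c : ℝ) - d) ^ 2 = 0 := by linarith
  rw [coe_inj, ← NNReal.coe_inj]
  linarith [pow_eq_zero_iff two_ne_zero |>.1 hsq]

lemma inv_div_div_add {v w : ℝ≥0∞} (hv0 : v ≠ 0) (hv : v ≠ ∞) (hw0 : w ≠ 0) (hw : w ≠ ∞) :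
    v⁻¹ / (w / (w + v)) = v⁻¹ + w⁻¹ := by
  rw [div_eq_mul_inv, ENNReal.inv_div (Or.inr hw) (Or.inr hw0), div_eq_mul_inv, add_mul,
    ENNReal.mul_inv_cancel hw0 hw, mul_add, mul_one, ← mul_assoc, ENNReal.inv_mul_cancel hv0 hv,
    one_mul]

lemma div_add_add_div_add {a b : ℝ≥0∞} (ha0 : a ≠ 0) (ha : a ≠ ∞) (hb : b ≠ ∞) :
    a / (a + b) + b / (b + a) = 1 := by
  rw [add_comm b a, ENNReal.div_add_div_same,
    ENNReal.div_self (by simp [ha0]) (add_ne_top.2 ⟨ha, hb⟩)]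

lemma eq_div_mul_of_div_add_eq_div_add {v w v₀ w₀ : ℝ≥0∞} (hv0 : v ≠ 0) (hv : v ≠ ∞) (hw : w ≠ ∞)
    (hv₀0 : v₀ ≠ 0) (hv₀ : v₀ ≠ ∞) (hw₀ : w₀ ≠ ∞)
    (h : w / (w + v) = w₀ / (w₀ + v₀)) : w = w₀ / v₀ * v := by
  lift v to NNReal using hv
  lift w to NNReal using hw
  lift v₀ to NNReal using hv₀
  lift w₀ to NNReal using hw₀
  simp only [ne_eq, coe_eq_zero] at hv0 hv₀0
  have h1 : w + v ≠ 0 := by positivity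
  have h2 : w₀ + v₀ ≠ 0 := by positivity
  rw [← coe_add, ← coe_add, ← coe_div h1, ← coe_div h2, coe_inj, ← NNReal.coe_inj] at h
  rw [← coe_div hv₀0, ← coe_mul, coe_inj, ← NNReal.coe_inj]
  push_cast at h ⊢
  have hv_pos : (0 : ℝ) < v := by positivity
  have hv₀_pos : (0 : ℝ) < v₀ := by positivity
  rw [div_eq_div_iff (by positivity) (by positivity)] at h
  field_simp
  linarith

private lemma div_add_mul_mul_add {a b : ℝ≥0∞} (ha0 : a ≠ 0) (ha : a ≠ ∞) (hb : b ≠ ∞) (r : ℝ≥0∞) :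
    a / (a + b) * (a * (a + b)) = a ^ 2 ∧ a⁻¹ * r * (a * (a + b)) = r * (a + b) := by
  have hab0 : a + b ≠ 0 := by simp [ha0]
  have hab : a + b ≠ ∞ := add_ne_top.2 ⟨ha, hb⟩
  constructor
  · rw [mul_comm a, ← mul_assoc, ENNReal.div_mul_cancel hab0 hab, sq]
  · rw [mul_comm a⁻¹, mul_assoc, ← mul_assoc a⁻¹, ENNReal.inv_mul_cancel ha0 ha, one_mul]

lemma div_add_le_inv_mul_iff {a b r : ℝ≥0∞} (ha0 : a ≠ 0) (ha : a ≠ ∞) (hb : b ≠ ∞) :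
    a / (a + b) ≤ a⁻¹ * r ↔ a ^ 2 ≤ r * (a + b) := by
  obtain ⟨h₁, h₂⟩ := div_add_mul_mul_add ha0 ha hb r
  rw [← ENNReal.mul_le_mul_iff_left (c := a * (a + b)) (by simp [ha0])
    (mul_ne_top ha (add_ne_top.2 ⟨ha, hb⟩)), h₁, h₂]

lemma div_add_eq_inv_mul_iff {a b r : ℝ≥0∞} (ha0 : a ≠ 0) (ha : a ≠ ∞) (hb : b ≠ ∞) :
    a / (a + b) = a⁻¹ * r ↔ a ^ 2 = r * (a + b) := by
  obtain ⟨h₁, h₂⟩ := div_add_mul_mul_add ha0 ha hb r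
  rw [← ENNReal.mul_left_inj (c := a * (a + b)) (by simp [ha0])
    (mul_ne_top ha (add_ne_top.2 ⟨ha, hb⟩)), h₁, h₂]

end ENNReal

/- Cauchy–Schwarz `(∫ q)² ≤ (∫ q φ) (∫ q / φ)` together with its equality case, by symmetrising
over `μ.prod μ`: pointwise `2 ≤ φ x / φ x' + φ x' / φ x`, with equality iff `φ x = φ x'`. -/
section CauchySchwarz

variable {X : Type*} {q φ : X → ℝ≥0∞}

lemma two_mul_mul_le_mul_div_add_div (hφ0 : ∀ x, φ x ≠ 0) (hφ : ∀ x, φ x ≠ ∞) (z : X × X) :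
    2 * (q z.1 * q z.2) ≤ q z.1 * q z.2 * (φ z.1 / φ z.2 + φ z.2 / φ z.1) := by
  rw [mul_comm]
  gcongr
  exact two_le_div_add_div (hφ0 _) (hφ _) (hφ0 _) (hφ _)

variable [MeasurableSpace X] {μ : Measure X} [SFinite μ]

lemma lintegral_prod_mul_mul_div_add_div (hq : Measurable q) (hφ : Measurable φ) :
    ∫⁻ z, q z.1 * q z.2 * (φ z.1 / φ z.2 + φ z.2 / φ z.1) ∂μ.prod μ
      = 2 * ((∫⁻ x, q x * φ x ∂μ) * ∫⁻ x, q x / φ x ∂μ) := by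
  have hqφ : Measurable fun x => q x * φ x := hq.mul hφ
  have hqdφ : Measurable fun x => q x / φ x := hq.div hφ
  have hsplit : ∀ z : X × X, q z.1 * q z.2 * (φ z.1 / φ z.2 + φ z.2 / φ z.1)
      = q z.1 * φ z.1 * (q z.2 / φ z.2) + q z.1 / φ z.1 * (q z.2 * φ z.2) := fun z => by
    simp only [div_eq_mul_inv]; ring
  rw [lintegral_congr hsplit, lintegral_add_left (by fun_prop),
    lintegral_prod_mul hqφ.aemeasurable hqdφ.aemeasurable,
    lintegral_prod_mul hqdφ.aemeasurable hqφ.aemeasurable]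
  ring

lemma lintegral_prod_two_mul_mul (hq : Measurable q) :
    ∫⁻ z, 2 * (q z.1 * q z.2) ∂μ.prod μ = 2 * (∫⁻ x, q x ∂μ) ^ 2 := by
  rw [lintegral_const_mul _ (by fun_prop), lintegral_prod_mul hq.aemeasurable hq.aemeasurable, sq]

lemma sq_lintegral_le_lintegral_mul_mul_lintegral_div (hq : Measurable q) (hφ : Measurable φ)
    (hφ0 : ∀ x, φ x ≠ 0) (hφ_top : ∀ x, φ x ≠ ∞) :
    (∫⁻ x, q x ∂μ) ^ 2 ≤ (∫⁻ x, q x * φ x ∂μ) * ∫⁻ x, q x / φ x ∂μ := by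
  rw [← ENNReal.mul_le_mul_iff_right two_ne_zero ofNat_ne_top, ← lintegral_prod_two_mul_mul hq,
    ← lintegral_prod_mul_mul_div_add_div hq hφ]
  exact lintegral_mono (two_mul_mul_le_mul_div_add_div hφ0 hφ_top)

lemma ae_ae_eq_of_lintegral_mul_mul_lintegral_div_le_sq (hq : Measurable q)
    (hφ : Measurable φ) (hφ0 : ∀ x, φ x ≠ 0) (hφ_top : ∀ x, φ x ≠ ∞)
    (hq_fin : ∫⁻ x, q x ∂μ ≠ ∞)
    (h : (∫⁻ x, q x * φ x ∂μ) * ∫⁻ x, q x / φ x ∂μ ≤ (∫⁻ x, q x ∂μ) ^ 2) :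
    ∀ᵐ x ∂μ, ∀ᵐ x' ∂μ, q x ≠ 0 → q x' ≠ 0 → φ x = φ x' := by
  have heq : (fun z : X × X => 2 * (q z.1 * q z.2)) =ᵐ[μ.prod μ]
      fun z => q z.1 * q z.2 * (φ z.1 / φ z.2 + φ z.2 / φ z.1) := by
    refine ae_eq_of_ae_le_of_lintegral_le
      (ae_of_all _ (two_mul_mul_le_mul_div_add_div hφ0 hφ_top)) ?_ (by fun_prop) ?_
    · rw [lintegral_prod_two_mul_mul hq]
      exact mul_ne_top ofNat_ne_top (pow_ne_top hq_fin)
    · rw [lintegral_prod_two_mul_mul hq, lintegral_prod_mul_mul_div_add_div hq hφ]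
      gcongr
  have hq_lt_top : ∀ᵐ x ∂μ, q x < ∞ := ae_lt_top hq hq_fin
  filter_upwards [Measure.ae_ae_of_ae_prod heq, hq_lt_top] with x hx hqx
  filter_upwards [hx, hq_lt_top] with x' hxx' hqx' hq0 hq0'
  refine eq_of_div_add_div_eq_two (hφ0 x) (hφ_top x) (hφ0 x') (hφ_top x') ?_
  rw [mul_comm] at hxx'
  exact ((ENNReal.mul_right_inj (mul_ne_zero hq0 hq0')
    (mul_ne_top hqx.ne hqx'.ne)).1 hxx').symm

end CauchySchwarz

section Fortet

variable {X Y : Type*} [MeasurableSpace X] [MeasurableSpace Y] {μ : Measure X} {ν : Measure Y}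
  {p : X → Y → ℝ≥0∞}

lemma measurable_fortetPsi [SFinite μ] (hp : Measurable (uncurry p)) {v : X → ℝ≥0∞}
    (hv : Measurable v) : Measurable (fortetPsi p μ v) :=
  Measurable.lintegral_prod_left (f := fun x y => p x y * (v x)⁻¹) (by fun_prop)

lemma lintegral_mul_lintegral_comm [SFinite μ] [SFinite ν] (hp : Measurable (uncurry p))
    {g : X → ℝ≥0∞} {h : Y → ℝ≥0∞} (hg : Measurable g) (hh : Measurable h) :
    ∫⁻ y, h y * ∫⁻ x, p x y * g x ∂μ ∂ν = ∫⁻ x, g x * ∫⁻ y, p x y * h y ∂ν ∂μ := by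
  have hpx : ∀ x, Measurable (p x) := fun x => hp.comp measurable_prodMk_left
  have hpy : ∀ y, Measurable fun x => p x y := fun y => hp.comp measurable_prodMk_right
  calc ∫⁻ y, h y * ∫⁻ x, p x y * g x ∂μ ∂ν
      = ∫⁻ y, ∫⁻ x, g x * (p x y * h y) ∂μ ∂ν := by
        refine lintegral_congr fun y => ?_
        rw [← lintegral_const_mul (f := fun x => p x y * g x) _ ((hpy y).mul hg)]
        exact lintegral_congr fun x => by ring
    _ = ∫⁻ x, ∫⁻ y, g x * (p x y * h y) ∂ν ∂μ :=
        (lintegral_lintegral_swap (by fun_prop)).symm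
    _ = ∫⁻ x, g x * ∫⁻ y, p x y * h y ∂ν ∂μ :=
        lintegral_congr fun x => lintegral_const_mul _ ((hpx x).mul hh)

lemma lintegral_inv_fortetPsi_mul_of_isFixedPt [SFinite μ] [SFinite ν]
    (hp : Measurable (uncurry p)) {v g : X → ℝ≥0∞} (hv : Measurable v)
    (hfix : IsFixedPt (fortetPhi p μ ν) v) (hg : Measurable g) :
    ∫⁻ y, (fortetPsi p μ v y)⁻¹ * ∫⁻ x, p x y * g x ∂μ ∂ν = ∫⁻ x, g x * v x ∂μ := by
  rw [lintegral_mul_lintegral_comm (h := fun y => (fortetPsi p μ v y)⁻¹) hp hg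
    (measurable_fortetPsi hp hv).inv]
  exact lintegral_congr fun x => by rw [← congrFun hfix x, fortetPhi]

lemma lintegral_mul_inv_div_div_add (hp : Measurable (uncurry p)) {v w : X → ℝ≥0∞}
    (hv : Measurable v) (hv0 : ∀ x, v x ≠ 0) (hv_top : ∀ x, v x ≠ ∞) (hw0 : ∀ x, w x ≠ 0)
    (hw_top : ∀ x, w x ≠ ∞) (y : Y) :
    ∫⁻ x, p x y * (v x)⁻¹ / (w x / (w x + v x)) ∂μ = fortetPsi p μ v y + fortetPsi p μ w y := by
  have hpy : Measurable fun x => p x y := hp.comp measurable_prodMk_right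
  rw [fortetPsi, fortetPsi, ← lintegral_add_left (f := fun x => p x y * (v x)⁻¹) (hpy.mul hv.inv)]
  refine lintegral_congr fun x => ?_
  rw [mul_div_assoc, inv_div_div_add (hv0 x) (hv_top x) (hw0 x) (hw_top x), mul_add]

structure IsFortetSolution (p : X → Y → ℝ≥0∞) (μ : Measure X) (ν : Measure Y) (v : X → ℝ≥0∞) :
    Prop where
  measurable : Measurable v
  ne_zero : ∀ x, v x ≠ 0
  ne_top : ∀ x, v x ≠ ∞
  isFixedPt : IsFixedPt (fortetPhi p μ ν) v

lemma IsFortetSolution.ae_fortetPsi_ne_zero_ne_top [IsProbabilityMeasure μ]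
    [IsProbabilityMeasure ν] (hp : Measurable (uncurry p)) {v : X → ℝ≥0∞}
    (hv : IsFortetSolution p μ ν v) :
    ∀ᵐ y ∂ν, fortetPsi p μ v y ≠ 0 ∧ fortetPsi p μ v y ≠ ∞ := by
  set a := fortetPsi p μ v
  -- `a⁻¹ * a` is `1` where `a ∉ {0, ∞}` and `0` otherwise, and it integrates to `∫ v⁻¹ v dμ = 1`.
  have hint : ∫⁻ y, (a y)⁻¹ * a y ∂ν = ∫⁻ _, 1 ∂ν := by
    rw [lintegral_one, measure_univ]
    calc ∫⁻ y, (a y)⁻¹ * a y ∂ν = ∫⁻ x, (v x)⁻¹ * v x ∂μ :=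
          lintegral_inv_fortetPsi_mul_of_isFixedPt hp hv.measurable hv.isFixedPt
            hv.measurable.inv
      _ = 1 := by
        rw [lintegral_congr fun x => ENNReal.inv_mul_cancel (hv.ne_zero x) (hv.ne_top x),
          lintegral_one, measure_univ]
  have hle : ∀ y, (a y)⁻¹ * a y ≤ 1 := fun y => by
    rcases eq_or_ne (a y) 0 with h | h
    · simp [h]
    rcases eq_or_ne (a y) ∞ with h' | h'
    · simp [h']
    · rw [ENNReal.inv_mul_cancel h h']
  filter_upwards [ae_eq_of_ae_le_of_lintegral_le (ae_of_all _ hle) (by simp [hint])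
    aemeasurable_const hint.ge] with y hy
  constructor <;> rintro h <;> simp [h] at hy

section FixedPointPair

variable [IsProbabilityMeasure μ] [IsProbabilityMeasure ν] {v w : X → ℝ≥0∞}

lemma ae_div_add_fortetPsi_le (hp : Measurable (uncurry p)) (hv : IsFortetSolution p μ ν v)
    (hw : IsFortetSolution p μ ν w) :
    ∀ᵐ y ∂ν, fortetPsi p μ v y / (fortetPsi p μ v y + fortetPsi p μ w y)
      ≤ (fortetPsi p μ v y)⁻¹ * ∫⁻ x, p x y * (v x)⁻¹ * (w x / (w x + v x)) ∂μ := by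
  filter_upwards [hv.ae_fortetPsi_ne_zero_ne_top hp, hw.ae_fortetPsi_ne_zero_ne_top hp]
    with y ⟨ha0, ha⟩ hwy
  have hpy : Measurable fun x => p x y := hp.comp measurable_prodMk_right
  have := hv.measurable
  have := hw.measurable
  rw [div_add_le_inv_mul_iff ha0 ha hwy.2, ← lintegral_mul_inv_div_div_add hp hv.measurable
    hv.ne_zero hv.ne_top hw.ne_zero hw.ne_top]
  exact sq_lintegral_le_lintegral_mul_mul_lintegral_div (by fun_prop) (by fun_prop)
    (fun x => by simp [hw.ne_zero, hv.ne_top, hw.ne_top])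
    (fun x => by simp [ENNReal.div_eq_top, hw.ne_top, hv.ne_zero])

lemma lintegral_inv_fortetPsi_mul_lintegral_div_add (hp : Measurable (uncurry p))
    (hv : IsFortetSolution p μ ν v) (hw : Measurable w) :
    ∫⁻ y, (fortetPsi p μ v y)⁻¹ * ∫⁻ x, p x y * (v x)⁻¹ * (w x / (w x + v x)) ∂μ ∂ν
      = ∫⁻ x, w x / (w x + v x) ∂μ := by
  have := hv.measurable
  simp only [mul_assoc]
  rw [lintegral_inv_fortetPsi_mul_of_isFixedPt hp this hv.isFixedPt (by fun_prop)]
  refine lintegral_congr fun x => ?_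
  rw [mul_comm, ← mul_assoc, ENNReal.mul_inv_cancel (hv.ne_zero x) (hv.ne_top x), one_mul]

lemma lintegral_div_add_fortetPsi_le (hp : Measurable (uncurry p))
    (hv : IsFortetSolution p μ ν v) (hw : IsFortetSolution p μ ν w) :
    ∫⁻ y, fortetPsi p μ v y / (fortetPsi p μ v y + fortetPsi p μ w y) ∂ν
      ≤ ∫⁻ x, w x / (w x + v x) ∂μ :=
  (lintegral_mono_ae (ae_div_add_fortetPsi_le hp hv hw)).trans_eq
    (lintegral_inv_fortetPsi_mul_lintegral_div_add hp hv hw.measurable)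

lemma ae_ae_div_add_eq_of_lintegral_le (hp : Measurable (uncurry p))
    (hv : IsFortetSolution p μ ν v) (hw : IsFortetSolution p μ ν w)
    (h : ∫⁻ x, w x / (w x + v x) ∂μ
      ≤ ∫⁻ y, fortetPsi p μ v y / (fortetPsi p μ v y + fortetPsi p μ w y) ∂ν) :
    ∀ᵐ y ∂ν, ∀ᵐ x ∂μ, ∀ᵐ x' ∂μ, p x y ≠ 0 → p x' y ≠ 0 →
      w x / (w x + v x) = w x' / (w x' + v x') := by
  have hv_meas := hv.measurable
  have hw_meas := hw.measurable
  have hΨv := measurable_fortetPsi (μ := μ) hp hv_meas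
  have hfin : ∫⁻ y, fortetPsi p μ v y / (fortetPsi p μ v y + fortetPsi p μ w y) ∂ν ≠ ∞ := by
    refine ne_top_of_le_ne_top one_ne_top ((lintegral_mono fun y => ?_).trans_eq
      (lintegral_one.trans measure_univ))
    exact ENNReal.div_le_of_le_mul (by rw [one_mul]; exact le_self_add)
  have heq := ae_eq_of_ae_le_of_lintegral_le (ae_div_add_fortetPsi_le hp hv hw) hfin
    (hΨv.inv.mul (Measurable.lintegral_prod_left (by fun_prop))).aemeasurable
    ((lintegral_inv_fortetPsi_mul_lintegral_div_add hp hv hw_meas).trans_le h)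
  filter_upwards [heq, hv.ae_fortetPsi_ne_zero_ne_top hp, hw.ae_fortetPsi_ne_zero_ne_top hp]
    with y hy ⟨ha0, ha⟩ hwy
  have hpy : Measurable fun x => p x y := hp.comp measurable_prodMk_right
  rw [div_add_eq_inv_mul_iff ha0 ha hwy.2, ← lintegral_mul_inv_div_div_add hp hv_meas hv.ne_zero
    hv.ne_top hw.ne_zero hw.ne_top] at hy
  have hcs := ae_ae_eq_of_lintegral_mul_mul_lintegral_div_le_sq (by fun_prop) (by fun_prop)
    (fun x => by simp [hw.ne_zero, hv.ne_top, hw.ne_top])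
    (fun x => by simp [ENNReal.div_eq_top, hw.ne_top, hv.ne_zero]) ha hy.ge
  filter_upwards [hcs] with x hx
  filter_upwards [hx] with x' hxx' hpx hpx'
  exact hxx' (by simp [hpx, hv.ne_top]) (by simp [hpx', hv.ne_top])

lemma IsFortetSolution.ae_ae_div_add_eq (hp : Measurable (uncurry p))
    (hv : IsFortetSolution p μ ν v) (hw : IsFortetSolution p μ ν w) :
    ∀ᵐ y ∂ν, ∀ᵐ x ∂μ, ∀ᵐ x' ∂μ, p x y ≠ 0 → p x' y ≠ 0 →
      w x / (w x + v x) = w x' / (w x' + v x') := by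
  have := hv.measurable
  have := hw.measurable
  have := measurable_fortetPsi (μ := μ) hp hv.measurable
  have := measurable_fortetPsi (μ := μ) hp hw.measurable
  have hν : ∫⁻ y, fortetPsi p μ v y / (fortetPsi p μ v y + fortetPsi p μ w y) ∂ν
      + ∫⁻ y, fortetPsi p μ w y / (fortetPsi p μ w y + fortetPsi p μ v y) ∂ν = 1 := by
    have h1 : ∀ᵐ y ∂ν, fortetPsi p μ v y / (fortetPsi p μ v y + fortetPsi p μ w y)
        + fortetPsi p μ w y / (fortetPsi p μ w y + fortetPsi p μ v y) = 1 := by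
      filter_upwards [hv.ae_fortetPsi_ne_zero_ne_top hp, hw.ae_fortetPsi_ne_zero_ne_top hp]
        with y hvy hwy
      exact div_add_add_div_add hvy.1 hvy.2 hwy.2
    rw [← lintegral_add_left (f := fun y => fortetPsi p μ v y /
      (fortetPsi p μ v y + fortetPsi p μ w y)) (by fun_prop), lintegral_congr_ae h1,
      lintegral_one, measure_univ]
  have hμ : ∫⁻ x, w x / (w x + v x) ∂μ + ∫⁻ x, v x / (v x + w x) ∂μ = 1 := by
    rw [← lintegral_add_left (f := fun x => w x / (w x + v x)) (by fun_prop),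
      lintegral_congr fun x =>
        div_add_add_div_add (hw.ne_zero x) (hw.ne_top x) (hv.ne_top x),
      lintegral_one, measure_univ]
  refine ae_ae_div_add_eq_of_lintegral_le hp hv hw ((ENNReal.add_le_add_iff_right
    (ne_top_of_le_ne_top one_ne_top (hν ▸ le_add_self))).1 ?_)
  calc _ ≤ ∫⁻ x, w x / (w x + v x) ∂μ + ∫⁻ x, v x / (v x + w x) ∂μ :=
        add_le_add le_rfl (lintegral_div_add_fortetPsi_le hp hw hv)
    _ = _ := hμ.trans hν.symm

end FixedPointPair

end Fortet

lemma exists_ae_ae_eq_of_ae_ae_ae_eq {X Y β : Type*} [MeasurableSpace X] [MeasurableSpace Y]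
    {μ : Measure X} {ν : Measure Y} [NeZero ν] {r : X → Y → Prop} {f : X → β}
    (hr : μ {x | ∀ y, r x y} ≠ 0)
    (h : ∀ᵐ y ∂ν, ∀ᵐ x ∂μ, ∀ᵐ x' ∂μ, r x y → r x' y → f x = f x') :
    ∃ x₀, ∀ᵐ y ∂ν, ∀ᵐ x ∂μ, r x y → f x = f x₀ := by
  -- Every point of `{x | ∀ y, r x y}` lies in all the supports `r · y` and links their constants.
  obtain ⟨y₀, hy₀⟩ := h.exists
  obtain ⟨x₀, hx₀r, hx₀⟩ := Measure.exists_mem_of_measure_ne_zero_of_ae hr (ae_restrict_of_ae hy₀)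
  refine ⟨x₀, ?_⟩
  filter_upwards [h] with y hy
  filter_upwards [hy] with x hx hrx
  obtain ⟨x', hx'r, hxx', hx₀x'⟩ :=
    Measure.exists_mem_of_measure_ne_zero_of_ae hr (ae_restrict_of_ae (hx.and hx₀))
  exact (hxx' hrx (hx'r y)).trans (hx₀x' (hx₀r y₀) (hx'r y₀)).symm

lemma fortetPhi_eq_mul_of_ae_ae_eq_mul {X Y : Type*} [MeasurableSpace X] [MeasurableSpace Y]
    {μ : Measure X} {ν : Measure Y} {p : X → Y → ℝ≥0∞} {v w : X → ℝ≥0∞} {κ : ℝ≥0∞}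
    (hκ0 : κ ≠ 0) (hκ : κ ≠ ∞) (h : ∀ᵐ y ∂ν, ∀ᵐ x ∂μ, p x y ≠ 0 → w x = κ * v x) (x : X) :
    fortetPhi p μ ν w x = κ * fortetPhi p μ ν v x := by
  have hΨ : ∀ᵐ y ∂ν, fortetPsi p μ w y = κ⁻¹ * fortetPsi p μ v y := by
    filter_upwards [h] with y hy
    rw [fortetPsi, fortetPsi, ← lintegral_const_mul' _ _ (inv_ne_top.2 hκ0)]
    refine lintegral_congr_ae ?_
    filter_upwards [hy] with x hx
    rcases eq_or_ne (p x y) 0 with h0 | h0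
    · simp [h0]
    · rw [hx h0, ENNReal.mul_inv (Or.inl hκ0) (Or.inl hκ)]
      ring
  rw [fortetPhi, fortetPhi, ← lintegral_const_mul' _ _ hκ]
  refine lintegral_congr_ae ?_
  filter_upwards [hΨ] with y hy
  rw [hy, ENNReal.mul_inv (Or.inl (ENNReal.inv_ne_zero.2 hκ)) (Or.inl (ENNReal.inv_ne_top.2 hκ0)),
    inv_inv]
  ring

theorem fortet_uniqueness_general
    {X Y : Type*} [MeasurableSpace X] [MeasurableSpace Y]
    (μ : Measure X) (ν : Measure Y)
    [IsProbabilityMeasure μ] [IsProbabilityMeasure ν]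
    (p : X → Y → ℝ≥0∞)
    (hp_meas : Measurable (Function.uncurry p))
    (U : X → ℝ≥0∞)
    (hU_fin : ∀ x, U x ≠ ∞)
    (hpos_all : 0 < μ {x | ∀ y, 0 < p x y})
    (u' u'' : X → ℝ≥0∞) (hu'_meas : Measurable u') (hu''_meas : Measurable u'')
    (hu'_pos : ∀ x, 0 < u' x) (hu'_le : ∀ x, u' x ≤ U x)
    (hu''_pos : ∀ x, 0 < u'' x) (hu''_le : ∀ x, u'' x ≤ U x)
    (hu'_fix : ∀ x, fortetPhi p μ ν u' x = u' x)
    (hu''_fix : ∀ x, fortetPhi p μ ν u'' x = u'' x) :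
    ∃ κ : ℝ≥0∞, 0 < κ ∧ κ ≠ ∞ ∧ ∀ x, u'' x = κ * u' x := by
  have hsol : ∀ u, Measurable u → (∀ x, 0 < u x) → (∀ x, u x ≤ U x) →
      (∀ x, fortetPhi p μ ν u x = u x) → IsFortetSolution p μ ν u :=
    fun u hu hpos hle hfix =>
      ⟨hu, fun x => (hpos x).ne', fun x => ne_top_of_le_ne_top (hU_fin x) (hle x), funext hfix⟩
  have hsol' := hsol u' hu'_meas hu'_pos hu'_le hu'_fix
  have hsol'' := hsol u'' hu''_meas hu''_pos hu''_le hu''_fix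
  obtain ⟨x₀, hx₀⟩ := exists_ae_ae_eq_of_ae_ae_ae_eq (r := fun x y => p x y ≠ 0)
    (by simpa only [pos_iff_ne_zero] using hpos_all) (hsol'.ae_ae_div_add_eq hp_meas hsol'')
  have hκ0 : u'' x₀ / u' x₀ ≠ 0 := by simp [hsol''.ne_zero, hsol'.ne_top]
  have hκ : u'' x₀ / u' x₀ ≠ ∞ := div_ne_top (hsol''.ne_top x₀) (hsol'.ne_zero x₀)
  refine ⟨u'' x₀ / u' x₀, pos_iff_ne_zero.2 hκ0, hκ, fun x => ?_⟩
  have hratio : ∀ᵐ y ∂ν, ∀ᵐ x ∂μ, p x y ≠ 0 → u'' x = u'' x₀ / u' x₀ * u' x := by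
    filter_upwards [hx₀] with y hy
    filter_upwards [hy] with x hx hpx
    exact eq_div_mul_of_div_add_eq_div_add (hsol'.ne_zero x) (hsol'.ne_top x) (hsol''.ne_top x)
      (hsol'.ne_zero x₀) (hsol'.ne_top x₀) (hsol''.ne_top x₀) (hx hpx)
  calc u'' x = fortetPhi p μ ν u'' x := (hu''_fix x).symm
    _ = u'' x₀ / u' x₀ * u' x := by rw [fortetPhi_eq_mul_of_ae_ae_eq_mul hκ0 hκ hratio, hu'_fix]

theorem fortet_uniqueness
    {X Y : Type*} [MeasurableSpace X] [MeasurableSpace Y]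
    (μ : Measure X) (ν : Measure Y)
    [IsProbabilityMeasure μ] [IsProbabilityMeasure ν]
    (p : X → Y → ℝ≥0∞)
    (hp_meas : Measurable (Function.uncurry p))
    (hp_fin : ∀ x y, p x y ≠ ∞)
    (U : X → ℝ≥0∞) (hU_meas : Measurable U)
    (hU_pos : ∀ x, 0 < U x) (hU_fin : ∀ x, U x ≠ ∞)
    (hPhiU : ∀ᵐ x ∂μ, fortetPhi p μ ν U x < ∞)
    (hPsiU : ∀ᵐ y ∂ν, fortetPsi p μ U y < ∞)
    (hpos_ae : ∀ᵐ y ∂ν, 0 < μ {x | 0 < p x y})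
    (hpos_all : 0 < μ {x | ∀ y, 0 < p x y})
    (u' u'' : X → ℝ≥0∞) (hu'_meas : Measurable u') (hu''_meas : Measurable u'')
    (hu'_pos : ∀ x, 0 < u' x) (hu'_le : ∀ x, u' x ≤ U x)
    (hu''_pos : ∀ x, 0 < u'' x) (hu''_le : ∀ x, u'' x ≤ U x)
    (hu'_fix : ∀ x, fortetPhi p μ ν u' x = u' x)
    (hu''_fix : ∀ x, fortetPhi p μ ν u'' x = u'' x) :
    ∃ κ : ℝ≥0∞, 0 < κ ∧ κ ≠ ∞ ∧ ∀ x, u'' x = κ * u' x :=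
  fortet_uniqueness_general μ ν p hp_meas U hU_fin hpos_all u' u'' hu'_meas hu''_meas hu'_pos hu'_le
    hu''_pos hu''_le hu'_fix hu''_fix

end
end

section
/- Let U : X → (0,∞) be measurable. Assume μ({x : p(x,y) > 0}) > 0 for ν-almost every y, and Ψ[U](y) < ∞ for ν-almost every y. Then for any measurable function u with 0 ≤ u ≤ U, one has ∫_{{x : Φ[u](x) > 0}} (Φ[u](x)/u(x)) dμ(x) = ν({y : Ψ[u](y) < ∞}). -/
open MeasureTheory ENNReal Filter Topology

noncomputable section

/-! By Tonelli, `∫ Φ[u]/u dμ = ∫ Ψ[u]⁻¹ · Ψ[u] dν`, because `∫ p(x,y) u(x)⁻¹ dμ(x)` is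
`Ψ[u](y)`. Since `u` is finite, `Ψ[u] > 0` wherever `p(·,y)` charges a set of positive measure,
so the integrand `Ψ[u]⁻¹ · Ψ[u]` is `ν`-a.e. the indicator of `{Ψ[u] < ∞}`. Restricting to
`{Φ[u] > 0}` changes nothing, since the integrand vanishes off that set. -/

theorem lintegral_inv_mul_self_eq_measure_lt_top {Y : Type*} [MeasurableSpace Y] {ν : Measure Y}
    {f : Y → ℝ≥0∞} (hf : Measurable f) (hf_ne : ∀ᵐ y ∂ν, f y ≠ 0) :
    ∫⁻ y, (f y)⁻¹ * f y ∂ν = ν {y | f y < ∞} := by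
  rw [← lintegral_indicator_one (measurableSet_lt hf measurable_const)]
  refine lintegral_congr_ae ?_
  filter_upwards [hf_ne] with y hy
  by_cases hfin : f y < ∞
  · simp [hfin, ENNReal.inv_mul_cancel hy hfin.ne]
  · simp [not_lt_top_iff.mp hfin]

section Fortet

variable {X Y : Type*} [MeasurableSpace X] [MeasurableSpace Y]
  {μ : Measure X} {ν : Measure Y} {p : X → Y → ℝ≥0∞} {u : X → ℝ≥0∞}

theorem measurable_fortetPsi_s9 [SFinite μ] (hp : Measurable (Function.uncurry p))
    (hu : Measurable u) : Measurable (fortetPsi p μ u) :=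
  (hp.mul (hu.comp measurable_fst).inv).lintegral_prod_left'

theorem fortetPsi_ne_zero (hp : Measurable (Function.uncurry p)) (hu : Measurable u)
    (hu_fin : ∀ x, u x ≠ ∞) {y : Y} (hy : 0 < μ {x | 0 < p x y}) : fortetPsi p μ u y ≠ 0 := by
  rw [fortetPsi, ← pos_iff_ne_zero,
    lintegral_pos_iff_support (f := fun x => p x y * (u x)⁻¹) (hp.of_uncurry_right.mul hu.inv)]
  refine hy.trans_le (measure_mono fun x hx => ?_)
  exact mul_ne_zero hx.ne' (ENNReal.inv_ne_zero.mpr (hu_fin x))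

theorem lintegral_fortetPhi_div [SFinite μ] [SFinite ν] (hp : Measurable (Function.uncurry p))
    (hu : Measurable u) :
    ∫⁻ x, fortetPhi p μ ν u x / u x ∂μ
      = ∫⁻ y, (fortetPsi p μ u y)⁻¹ * fortetPsi p μ u y ∂ν := by
  have hψ := measurable_fortetPsi_s9 (μ := μ) hp hu
  calc ∫⁻ x, fortetPhi p μ ν u x / u x ∂μ
      = ∫⁻ x, ∫⁻ y, p x y * (fortetPsi p μ u y)⁻¹ * (u x)⁻¹ ∂ν ∂μ := by
        refine lintegral_congr fun x => ?_
        rw [div_eq_mul_inv, fortetPhi, lintegral_mul_const _ ?_]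
        exact hp.of_uncurry_left.mul hψ.inv
    _ = ∫⁻ y, ∫⁻ x, (fortetPsi p μ u y)⁻¹ * (p x y * (u x)⁻¹) ∂μ ∂ν := by
        rw [lintegral_lintegral_swap]
        · simp only [mul_comm, mul_left_comm, mul_assoc]
        · exact ((hp.mul (hψ.comp measurable_snd).inv).mul
            (hu.comp measurable_fst).inv).aemeasurable
    _ = ∫⁻ y, (fortetPsi p μ u y)⁻¹ * fortetPsi p μ u y ∂ν := by
        refine lintegral_congr fun y => ?_
        rw [fortetPsi, lintegral_const_mul _ (f := fun x => p x y * (u x)⁻¹)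
          (hp.of_uncurry_right.mul hu.inv)]

end Fortet

theorem fortet_key_identity_general
    {X Y : Type*} [MeasurableSpace X] [MeasurableSpace Y]
    (μ : Measure X) (ν : Measure Y)
    [IsProbabilityMeasure μ] [IsProbabilityMeasure ν]
    (p : X → Y → ℝ≥0∞)
    (hp_meas : Measurable (Function.uncurry p))
    (U : X → ℝ≥0∞) (hU_fin : ∀ x, U x ≠ ∞)
    (hpos_ae : ∀ᵐ y ∂ν, 0 < μ {x | 0 < p x y})
    (u : X → ℝ≥0∞) (hu_meas : Measurable u) (hu_le : ∀ x, u x ≤ U x) :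
    ∫⁻ x in {x | 0 < fortetPhi p μ ν u x}, fortetPhi p μ ν u x / u x ∂μ
      = ν {y | fortetPsi p μ u y < ∞} := by
  have hu_fin : ∀ x, u x ≠ ∞ := fun x => ne_top_of_le_ne_top (hU_fin x) (hu_le x)
  have hsupp : (fun x => fortetPhi p μ ν u x / u x).support ⊆ {x | 0 < fortetPhi p μ ν u x} :=
    fun x hx => pos_iff_ne_zero.mpr fun h : fortetPhi p μ ν u x = 0 => hx (by simp [h])
  rw [setLIntegral_eq_of_support_subset hsupp, lintegral_fortetPhi_div hp_meas hu_meas]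
  exact lintegral_inv_mul_self_eq_measure_lt_top (measurable_fortetPsi_s9 hp_meas hu_meas)
    (hpos_ae.mono fun y hy => fortetPsi_ne_zero hp_meas hu_meas hu_fin hy)

theorem fortet_key_identity
    {X Y : Type*} [MeasurableSpace X] [MeasurableSpace Y]
    (μ : Measure X) (ν : Measure Y)
    [IsProbabilityMeasure μ] [IsProbabilityMeasure ν]
    (p : X → Y → ℝ≥0∞)
    (hp_meas : Measurable (Function.uncurry p))
    (hp_fin : ∀ x y, p x y ≠ ∞)
    (U : X → ℝ≥0∞) (hU_meas : Measurable U)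
    (hU_pos : ∀ x, 0 < U x) (hU_fin : ∀ x, U x ≠ ∞)
    (hpos_ae : ∀ᵐ y ∂ν, 0 < μ {x | 0 < p x y})
    (hPsiU : ∀ᵐ y ∂ν, fortetPsi p μ U y < ∞)
    (u : X → ℝ≥0∞) (hu_meas : Measurable u) (hu_le : ∀ x, u x ≤ U x) :
    ∫⁻ x in {x | 0 < fortetPhi p μ ν u x}, fortetPhi p μ ν u x / u x ∂μ
      = ν {y | fortetPsi p μ u y < ∞} :=
  fortet_key_identity_general μ ν p hp_meas U hU_fin hpos_ae u hu_meas hu_le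
end
end

section
/- Let U : X → (0,∞) be measurable, let u_* be the pointwise limit of the Fortet scheme, and assume: Φ[U](x) < ∞ for μ-almost every x; Ψ[U](y) < ∞ for ν-almost every y; and μ({x : p(x,y) > 0}) > 0 for ν-almost every y. If Φ[u_*](x) > 0 for μ-almost every x, then Ψ[u_*](y) < ∞ for ν-almost every y, and 0 < u_* = Φ[u_*] ≤ U holds μ-almost everywhere. -/
open MeasureTheory ENNReal Filter Topology

noncomputable section

/-- The Fortet scheme: `fortetSeq p μ ν U n` is `u_{n+1}`, i.e. `u₁ = U` and
`u_{n+1} = max (U/(n+1)) (min (Φ[u_n]) U)`. -/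
def fortetSeq {X Y : Type*} [MeasurableSpace X] [MeasurableSpace Y]
    (p : X → Y → ℝ≥0∞) (μ : Measure X) (ν : Measure Y) (U : X → ℝ≥0∞) :
    ℕ → X → ℝ≥0∞
  | 0 => U
  | n + 1 => fun x =>
      max (U x / (n + 2)) (min (fortetPhi p μ ν (fortetSeq p μ ν U n) x) (U x))


/-!
Along the Fortet scheme `u_n` decreases, so `Ψ[u_n]` increases to `Ψ[u_*]` by monotone
convergence and, since `Φ[U] < ∞`, `Φ[u_n]` decreases to `Φ[u_*]` by decreasing convergence.
Passing to the limit in the recursion gives `u_* = min (Φ[u_*]) U`, hence `u_* ≤ Φ[u_*]`,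
and positivity of `Φ[u_*]` makes `u_*` positive. Tonelli then gives the balance
`∫ Φ[u_*] / u_* dμ = ∫ Ψ[u_*]⁻¹ Ψ[u_*] dν`, whose left side is `≥ 1` and right side `≤ 1`;
equality forces `Ψ[u_*] < ∞` `ν`-a.e. and `Φ[u_*] = u_*` `μ`-a.e.
-/

open Function

namespace Fortet

variable {X Y : Type*} [MeasurableSpace X] [MeasurableSpace Y]
  {μ : Measure X} {ν : Measure Y} {p : X → Y → ℝ≥0∞} {U u : X → ℝ≥0∞}

omit [MeasurableSpace Y] in
lemma fortetPsi_anti {u v : X → ℝ≥0∞} (h : u ≤ v) : fortetPsi p μ v ≤ fortetPsi p μ u :=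
  fun _ => lintegral_mono fun x => mul_le_mul_right (ENNReal.inv_le_inv.2 (h x)) _

lemma fortetPhi_mono {u v : X → ℝ≥0∞} (h : u ≤ v) : fortetPhi p μ ν u ≤ fortetPhi p μ ν v :=
  fun _ => lintegral_mono fun y => mul_le_mul_right (ENNReal.inv_le_inv.2 (fortetPsi_anti h y)) _

lemma measurable_fortetPsi [SFinite μ] (hp : Measurable (uncurry p)) (hu : Measurable u) :
    Measurable (fortetPsi p μ u) :=
  (hp.mul (hu.comp measurable_fst).inv).lintegral_prod_left

lemma measurable_fortetPhi [SFinite μ] [SFinite ν] (hp : Measurable (uncurry p))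
    (hu : Measurable u) : Measurable (fortetPhi p μ ν u) :=
  (hp.mul ((measurable_fortetPsi hp hu).comp measurable_snd).inv).lintegral_prod_right

lemma fortetSeq_le : ∀ n, fortetSeq p μ ν U n ≤ U
  | 0 => le_rfl
  | _ + 1 => fun _ => max_le
      ((ENNReal.div_le_div_left (le_add_left one_le_two) _).trans_eq (div_one _)) (min_le_right _ _)

lemma fortetSeq_succ_le : ∀ n, fortetSeq p μ ν U (n + 1) ≤ fortetSeq p μ ν U n
  | 0 => fortetSeq_le 1
  | n + 1 => fun x => max_le_max
      (ENNReal.div_le_div_left (by gcongr; norm_num) _)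
      (min_le_min_right _ (fortetPhi_mono (fortetSeq_succ_le n) x))

lemma antitone_fortetSeq (x : X) : Antitone fun n => fortetSeq p μ ν U n x :=
  antitone_nat_of_succ_le fun n => fortetSeq_succ_le n x

lemma measurable_fortetSeq [SFinite μ] [SFinite ν] (hp : Measurable (uncurry p))
    (hU : Measurable U) : ∀ n, Measurable (fortetSeq p μ ν U n)
  | 0 => hU
  | n + 1 =>
    (hU.div_const _).max ((measurable_fortetPhi hp (measurable_fortetSeq hp hU n)).min hU)

lemma tendsto_fortetPsi_of_antitone (hp : Measurable (uncurry p)) (hp_fin : ∀ x y, p x y ≠ ∞)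
    {v : ℕ → X → ℝ≥0∞} (hv_meas : ∀ n, Measurable (v n)) (hv : ∀ x, Antitone fun n => v n x)
    (hvu : ∀ x, Tendsto (fun n => v n x) atTop (𝓝 (u x))) (y : Y) :
    Tendsto (fun n => fortetPsi p μ (v n) y) atTop (𝓝 (fortetPsi p μ u y)) := by
  refine lintegral_tendsto_of_tendsto_of_monotone
    (fun n => ((hp.comp measurable_prodMk_right).mul (hv_meas n).inv).aemeasurable)
    (ae_of_all _ fun x m n hmn => mul_le_mul_right (ENNReal.inv_le_inv.2 (hv x hmn)) _)
    (ae_of_all _ fun x => ?_)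
  exact ENNReal.Tendsto.const_mul (tendsto_inv_iff.2 (hvu x)) (Or.inr (hp_fin x y))

lemma tendsto_fortetPhi_of_antitone [SFinite μ] (hp : Measurable (uncurry p))
    (hp_fin : ∀ x y, p x y ≠ ∞) {v : ℕ → X → ℝ≥0∞} (hv_meas : ∀ n, Measurable (v n))
    (hv : ∀ x, Antitone fun n => v n x) (hvu : ∀ x, Tendsto (fun n => v n x) atTop (𝓝 (u x)))
    {x : X} (h0 : fortetPhi p μ ν (v 0) x ≠ ∞) :
    Tendsto (fun n => fortetPhi p μ ν (v n) x) atTop (𝓝 (fortetPhi p μ ν u x)) := by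
  refine lintegral_tendsto_of_tendsto_of_antitone
    (fun n => ((hp.comp measurable_prodMk_left).mul
      (measurable_fortetPsi hp (hv_meas n)).inv).aemeasurable)
    (ae_of_all _ fun y m n hmn => mul_le_mul_right (ENNReal.inv_le_inv.2
      (fortetPsi_anti (fun x' => hv x' hmn) y)) _) h0 (ae_of_all _ fun y => ?_)
  exact ENNReal.Tendsto.const_mul
    (tendsto_inv_iff.2 (tendsto_fortetPsi_of_antitone hp hp_fin hv_meas hv hvu y))
    (Or.inr (hp_fin x y))

lemma eq_min_fortetPhi_of_tendsto_fortetSeq {x : X} (hU : U x ≠ ∞)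
    (hu : Tendsto (fun n => fortetSeq p μ ν U n x) atTop (𝓝 (u x)))
    (hPhi : Tendsto (fun n => fortetPhi p μ ν (fortetSeq p μ ν U n) x) atTop
      (𝓝 (fortetPhi p μ ν u x))) :
    u x = min (fortetPhi p μ ν u x) (U x) := by
  have h_floor : Tendsto (fun n : ℕ => U x / ((n : ℝ≥0∞) + 2)) atTop (𝓝 0) := by
    simpa using ENNReal.Tendsto.const_div
      (ENNReal.tendsto_nat_nhds_top.add tendsto_const_nhds) (Or.inr hU)
  have h_rec := h_floor.max (hPhi.min (tendsto_const_nhds (x := U x)))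
  rw [max_eq_right zero_le] at h_rec
  exact tendsto_nhds_unique ((tendsto_add_atTop_iff_nat 1).2 hu) h_rec

lemma lintegral_fortetPhi_mul_inv [SFinite μ] [SFinite ν] (hp : Measurable (uncurry p))
    (hu : Measurable u) :
    ∫⁻ x, fortetPhi p μ ν u x * (u x)⁻¹ ∂μ
      = ∫⁻ y, (fortetPsi p μ u y)⁻¹ * fortetPsi p μ u y ∂ν := by
  have hPsi := measurable_fortetPsi (μ := μ) hp hu
  calc ∫⁻ x, fortetPhi p μ ν u x * (u x)⁻¹ ∂μ
      = ∫⁻ x, ∫⁻ y, p x y * (fortetPsi p μ u y)⁻¹ * (u x)⁻¹ ∂ν ∂μ := by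
        refine lintegral_congr fun x => ?_
        exact (lintegral_mul_const _ ((hp.comp measurable_prodMk_left).mul hPsi.inv)).symm
    _ = ∫⁻ y, ∫⁻ x, p x y * (fortetPsi p μ u y)⁻¹ * (u x)⁻¹ ∂μ ∂ν :=
        lintegral_lintegral_swap ((hp.mul (hPsi.comp measurable_snd).inv).mul
          (hu.comp measurable_fst).inv).aemeasurable
    _ = ∫⁻ y, (fortetPsi p μ u y)⁻¹ * fortetPsi p μ u y ∂ν := by
        refine lintegral_congr fun y => ?_
        exact (lintegral_congr fun x => by ring).trans
          (lintegral_const_mul _ ((hp.comp measurable_prodMk_right).mul hu.inv))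

theorem ae_eq_fortetPhi_of_ae_le_fortetPhi [IsProbabilityMeasure μ] [IsProbabilityMeasure ν]
    (hp : Measurable (uncurry p)) (hu : Measurable u) (hu_pos : ∀ᵐ x ∂μ, 0 < u x)
    (hu_fin : ∀ᵐ x ∂μ, u x ≠ ∞) (h_le : ∀ᵐ x ∂μ, u x ≤ fortetPhi p μ ν u x) :
    (∀ᵐ y ∂ν, fortetPsi p μ u y < ∞) ∧ ∀ᵐ x ∂μ, u x = fortetPhi p μ ν u x := by
  have h_balance := lintegral_fortetPhi_mul_inv (μ := μ) (ν := ν) hp hu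
  have h_one_le : ∀ᵐ x ∂μ, 1 ≤ fortetPhi p μ ν u x * (u x)⁻¹ := by
    filter_upwards [hu_pos, hu_fin, h_le] with x h0 h_top hx
    calc 1 = u x * (u x)⁻¹ := (ENNReal.mul_inv_cancel h0.ne' h_top).symm
      _ ≤ _ := by gcongr
  have hX_ge : 1 ≤ ∫⁻ x, fortetPhi p μ ν u x * (u x)⁻¹ ∂μ := by
    simpa using lintegral_mono_ae h_one_le
  have hY_le : ∫⁻ y, (fortetPsi p μ u y)⁻¹ * fortetPsi p μ u y ∂ν ≤ 1 := by
    simpa using lintegral_mono (μ := ν) fun y => ENNReal.inv_mul_le_one (fortetPsi p μ u y)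
  have hY_eq : ∀ᵐ y ∂ν, (fortetPsi p μ u y)⁻¹ * fortetPsi p μ u y = 1 :=
    ae_eq_of_ae_le_of_lintegral_le (ae_of_all _ fun y => ENNReal.inv_mul_le_one _)
      (hY_le.trans_lt one_lt_top).ne aemeasurable_const (by simpa using hX_ge.trans h_balance.le)
  have h_one_eq : ∀ᵐ x ∂μ, 1 = fortetPhi p μ ν u x * (u x)⁻¹ :=
    ae_eq_of_ae_le_of_lintegral_le h_one_le (by simp)
      ((measurable_fortetPhi hp hu).mul hu.inv).aemeasurable (by simpa [h_balance] using hY_le)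
  constructor
  · filter_upwards [hY_eq] with y hy
    exact lt_top_iff_ne_top.2 fun h => by simp [h] at hy
  · filter_upwards [h_one_eq, hu_pos, hu_fin] with x hx h0 h_top
    rw [← div_eq_mul_inv, eq_comm, ENNReal.div_eq_one_iff h0.ne' h_top] at hx
    exact hx.symm

end Fortet

open Fortet in
theorem fortet_positivity_implies_fixed_point_general
    {X Y : Type*} [MeasurableSpace X] [MeasurableSpace Y]
    (μ : Measure X) (ν : Measure Y)
    [IsProbabilityMeasure μ] [IsProbabilityMeasure ν]
    (p : X → Y → ℝ≥0∞)
    (hp_meas : Measurable (Function.uncurry p))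
    (hp_fin : ∀ x y, p x y ≠ ∞)
    (U : X → ℝ≥0∞) (hU_meas : Measurable U)
    (hU_pos : ∀ x, 0 < U x) (hU_fin : ∀ x, U x ≠ ∞)
    (hPhiU : ∀ᵐ x ∂μ, fortetPhi p μ ν U x < ∞)
    (ustar : X → ℝ≥0∞)
    (hustar : ∀ x, Tendsto (fun n => fortetSeq p μ ν U n x) atTop (𝓝 (ustar x)))
    (hPhi_pos : ∀ᵐ x ∂μ, 0 < fortetPhi p μ ν ustar x) :
    (∀ᵐ y ∂ν, fortetPsi p μ ustar y < ∞) ∧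
      (∀ᵐ x ∂μ, 0 < ustar x ∧ ustar x = fortetPhi p μ ν ustar x ∧ ustar x ≤ U x) := by
  have hv_meas := measurable_fortetSeq (μ := μ) (ν := ν) hp_meas hU_meas
  have hu_meas : Measurable ustar :=
    measurable_of_tendsto_metrizable hv_meas (tendsto_pi_nhds.2 hustar)
  have hu_le (x : X) : ustar x ≤ U x := (antitone_fortetSeq x).le_of_tendsto (hustar x) 0
  have hu_min : ∀ᵐ x ∂μ, ustar x = min (fortetPhi p μ ν ustar x) (U x) := by
    filter_upwards [hPhiU] with x hx
    exact eq_min_fortetPhi_of_tendsto_fortetSeq (hU_fin x) (hustar x)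
      (tendsto_fortetPhi_of_antitone hp_meas hp_fin hv_meas antitone_fortetSeq hustar hx.ne)
  have hu_pos : ∀ᵐ x ∂μ, 0 < ustar x := by
    filter_upwards [hu_min, hPhi_pos] with x hx hPhi
    exact hx ▸ lt_min hPhi (hU_pos x)
  obtain ⟨hPsi_fin, hfix⟩ := ae_eq_fortetPhi_of_ae_le_fortetPhi hp_meas hu_meas hu_pos
    (ae_of_all _ fun x => ne_top_of_le_ne_top (hU_fin x) (hu_le x))
    (by filter_upwards [hu_min] with x hx; exact hx ▸ min_le_left _ _)
  exact ⟨hPsi_fin, by filter_upwards [hu_pos, hfix] with x h0 h1 using ⟨h0, h1, hu_le x⟩⟩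

theorem fortet_positivity_implies_fixed_point
    {X Y : Type*} [MeasurableSpace X] [MeasurableSpace Y]
    (μ : Measure X) (ν : Measure Y)
    [IsProbabilityMeasure μ] [IsProbabilityMeasure ν]
    (p : X → Y → ℝ≥0∞)
    (hp_meas : Measurable (Function.uncurry p))
    (hp_fin : ∀ x y, p x y ≠ ∞)
    (U : X → ℝ≥0∞) (hU_meas : Measurable U)
    (hU_pos : ∀ x, 0 < U x) (hU_fin : ∀ x, U x ≠ ∞)
    (hPhiU : ∀ᵐ x ∂μ, fortetPhi p μ ν U x < ∞)
    (hPsiU : ∀ᵐ y ∂ν, fortetPsi p μ U y < ∞)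
    (hpos_ae : ∀ᵐ y ∂ν, 0 < μ {x | 0 < p x y})
    (ustar : X → ℝ≥0∞)
    (hustar : ∀ x, Tendsto (fun n => fortetSeq p μ ν U n x) atTop (𝓝 (ustar x)))
    (hPhi_pos : ∀ᵐ x ∂μ, 0 < fortetPhi p μ ν ustar x) :
    (∀ᵐ y ∂ν, fortetPsi p μ ustar y < ∞) ∧
      (∀ᵐ x ∂μ, 0 < ustar x ∧ ustar x = fortetPhi p μ ν ustar x ∧ ustar x ≤ U x) :=
  fortet_positivity_implies_fixed_point_general μ ν p hp_meas hp_fin U hU_meas hU_pos hU_fin hPhiU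
    ustar hustar hPhi_pos

end
end

section
/- Let α : X → (0,∞) and β : Y → (0,∞) be measurable positive functions, and define the twisted transition density p̃(x,y) := α(x)·β(y)·p(x,y). Then a pair of σ-finite measures (a, b) solves the Schrödinger system for (p, μ, ν) if and only if the pair (ã, b̃) := (measure with density α⁻¹ with respect to a, measure with density β⁻¹ with respect to b) solves the Schrödinger system for (p̃, μ, ν). -/
open MeasureTheory ENNReal Filter Topology

/-!
Twisting only rescales each equation of the system. In the `x`-marginal, the factor `β y` of the
twisted density cancels against the density `β⁻¹` of `b̃`, leaving `α x * ∫⁻ y, p x y ∂b`, and the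
remaining factor `α x` cancels against the density `α⁻¹` of `ã`; the `y`-marginal is symmetric.
Since `α⁻¹` and `β⁻¹` are finite and nonzero, `ã` and `b̃` are σ-finite exactly when `a` and `b` are.
-/

noncomputable section

/-- A pair `(a, b)` of σ-finite measures solves the Schrödinger system for `(p, μ, ν)`. -/
def IsSchrodingerSolution {X Y : Type*} [MeasurableSpace X] [MeasurableSpace Y]
    (p : X → Y → ℝ≥0∞) (μ : Measure X) (ν : Measure Y)
    (a : Measure X) (b : Measure Y) : Prop :=
  SigmaFinite a ∧ SigmaFinite b ∧
    μ = a.withDensity (fun x => ∫⁻ y, p x y ∂b) ∧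
    ν = b.withDensity (fun y => ∫⁻ x, p x y ∂a)

section WithDensity

variable {X : Type*} [MeasurableSpace X] {μ : Measure X} {f : X → ℝ≥0∞}

theorem withDensity_mul_non_measurable (hf : Measurable f) (hf_lt_top : ∀ᵐ x ∂μ, f x < ∞)
    (g : X → ℝ≥0∞) : μ.withDensity (f * g) = (μ.withDensity f).withDensity g := by
  ext1 s hs
  rw [withDensity_apply _ hs, withDensity_apply _ hs, restrict_withDensity hs,
    lintegral_withDensity_eq_lintegral_mul_non_measurable _ hf (ae_restrict_of_ae hf_lt_top)]

theorem sigmaFinite_withDensity_iff (hf : Measurable f) (hf_ne_zero : ∀ x, f x ≠ 0)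
    (hf_ne_top : ∀ x, f x ≠ ∞) : SigmaFinite (μ.withDensity f) ↔ SigmaFinite μ := by
  refine ⟨fun _ => ?_, fun _ => SigmaFinite.withDensity_of_ne_top' hf_ne_top⟩
  rw [← withDensity_inv_same (μ := μ) hf (ae_of_all _ hf_ne_zero) (ae_of_all _ hf_ne_top)]
  exact SigmaFinite.withDensity_of_ne_top' fun x => inv_ne_top.mpr (hf_ne_zero x)

theorem withDensity_inv_withDensity_mul (hf : Measurable f) (hf_ne_zero : ∀ x, f x ≠ 0)
    (hf_ne_top : ∀ x, f x ≠ ∞) (g : X → ℝ≥0∞) :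
    (μ.withDensity fun x => (f x)⁻¹).withDensity (fun x => f x * g x) = μ.withDensity g := by
  rw [← withDensity_mul_non_measurable hf.fun_inv (ae_of_all _ fun x => inv_lt_top.mpr
    (pos_iff_ne_zero.mpr (hf_ne_zero x)))]
  congr 1 with x
  exact ENNReal.inv_mul_cancel_left (hf_ne_zero x) (hf_ne_top x)

theorem lintegral_withDensity_inv_mul (hf : Measurable f) (hf_ne_zero : ∀ x, f x ≠ 0)
    (hf_ne_top : ∀ x, f x ≠ ∞) (g : X → ℝ≥0∞) :
    ∫⁻ x, f x * g x ∂μ.withDensity (fun x => (f x)⁻¹) = ∫⁻ x, g x ∂μ := by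
  rw [lintegral_withDensity_eq_lintegral_mul_non_measurable _ hf.fun_inv (ae_of_all _ fun x =>
    inv_lt_top.mpr (pos_iff_ne_zero.mpr (hf_ne_zero x)))]
  congr 1 with x
  exact ENNReal.inv_mul_cancel_left (hf_ne_zero x) (hf_ne_top x)

end WithDensity

theorem withDensity_twisted_marginal {X Y : Type*} [MeasurableSpace X] [MeasurableSpace Y]
    (p : X → Y → ℝ≥0∞) {α : X → ℝ≥0∞} {β : Y → ℝ≥0∞}
    (hα : Measurable α) (hα_ne_zero : ∀ x, α x ≠ 0) (hα_ne_top : ∀ x, α x ≠ ∞)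
    (hβ : Measurable β) (hβ_ne_zero : ∀ y, β y ≠ 0) (hβ_ne_top : ∀ y, β y ≠ ∞)
    (a : Measure X) (b : Measure Y) :
    (a.withDensity fun x => (α x)⁻¹).withDensity
        (fun x => ∫⁻ y, α x * β y * p x y ∂b.withDensity fun y => (β y)⁻¹) =
      a.withDensity fun x => ∫⁻ y, p x y ∂b := by
  have hmarginal (x : X) :
      ∫⁻ y, α x * β y * p x y ∂b.withDensity (fun y => (β y)⁻¹) = α x * ∫⁻ y, p x y ∂b := by
    rw [← lintegral_const_mul' _ _ (hα_ne_top x),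
      ← lintegral_withDensity_inv_mul (μ := b) hβ hβ_ne_zero hβ_ne_top]
    congr 1 with y
    ring
  simp_rw [hmarginal]
  exact withDensity_inv_withDensity_mul hα hα_ne_zero hα_ne_top _

theorem fortet_twisting_general
    {X Y : Type*} [MeasurableSpace X] [MeasurableSpace Y]
    (μ : Measure X) (ν : Measure Y)
    (p : X → Y → ℝ≥0∞)
    (α : X → ℝ≥0∞) (hα_meas : Measurable α)
    (hα_pos : ∀ x, 0 < α x) (hα_fin : ∀ x, α x ≠ ∞)
    (β : Y → ℝ≥0∞) (hβ_meas : Measurable β)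
    (hβ_pos : ∀ y, 0 < β y) (hβ_fin : ∀ y, β y ≠ ∞)
    (a : Measure X) (b : Measure Y) :
    IsSchrodingerSolution p μ ν a b ↔
      IsSchrodingerSolution (fun x y => α x * β y * p x y) μ ν
        (a.withDensity (fun x => (α x)⁻¹)) (b.withDensity (fun y => (β y)⁻¹)) := by
  have hα_ne_zero x := (hα_pos x).ne'
  have hβ_ne_zero y := (hβ_pos y).ne'
  have hμ := withDensity_twisted_marginal p hα_meas hα_ne_zero hα_fin
    hβ_meas hβ_ne_zero hβ_fin a b
  have hν := withDensity_twisted_marginal (fun y x => p x y) hβ_meas hβ_ne_zero hβ_fin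
    hα_meas hα_ne_zero hα_fin b a
  simp_rw [mul_comm (β _) (α _)] at hν
  rw [IsSchrodingerSolution, IsSchrodingerSolution, hμ, hν,
    sigmaFinite_withDensity_iff hα_meas.fun_inv (fun x => ENNReal.inv_ne_zero.mpr (hα_fin x))
      (fun x => inv_ne_top.mpr (hα_ne_zero x)),
    sigmaFinite_withDensity_iff hβ_meas.fun_inv (fun y => ENNReal.inv_ne_zero.mpr (hβ_fin y))
      (fun y => inv_ne_top.mpr (hβ_ne_zero y))]

theorem fortet_twisting
    {X Y : Type*} [MeasurableSpace X] [MeasurableSpace Y]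
    (μ : Measure X) (ν : Measure Y)
    [IsProbabilityMeasure μ] [IsProbabilityMeasure ν]
    (p : X → Y → ℝ≥0∞)
    (hp_meas : Measurable (Function.uncurry p))
    (α : X → ℝ≥0∞) (hα_meas : Measurable α)
    (hα_pos : ∀ x, 0 < α x) (hα_fin : ∀ x, α x ≠ ∞)
    (β : Y → ℝ≥0∞) (hβ_meas : Measurable β)
    (hβ_pos : ∀ y, 0 < β y) (hβ_fin : ∀ y, β y ≠ ∞)
    (a : Measure X) (b : Measure Y) :
    IsSchrodingerSolution p μ ν a b ↔
      IsSchrodingerSolution (fun x y => α x * β y * p x y) μ ν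
        (a.withDensity (fun x => (α x)⁻¹)) (b.withDensity (fun y => (β y)⁻¹)) :=
  fortet_twisting_general μ ν p α hα_meas hα_pos hα_fin β hβ_meas hβ_pos hβ_fin a b

end
end
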